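/- Let m ≥ 4, X ≠ 0 complex, λ > 0 real, and α₁,…,αₘ nonzero reals taking at most two values, one of them, α, occurring exactly once (say α₁ = α and α_j = β for j ≥ 2), with x_j := α_j X satisfying Σ_{ℓ≠j} x_j conj(x_ℓ) = −λ for all j and Σ_j α_j = 1. Then a contradiction follows; i.e., the split (1, m−1) is impossible. -/

import Mathlib

/-!
Since `∑ α = 1`, the `j`-th relation reads `α_j (1 - α_j) |X|² = -λ`, so every `α_j` is a root of
the same quadratic `t (1 - t) = -λ / |X|² < 0`. Hence `a = b` or `a + b = 1`. If `a + b = 1`, then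
`a + (m - 1) b = 1` forces `(m - 2) b = 0`, so `b = 0`; if `a = b`, then `b = 1 / m ∈ (0, 1)`.
Either way `b (1 - b) ≥ 0`, a contradiction.
-/

open Finset

theorem sum_sdiff_singleton_mul_conj {ι : Type*} [Fintype ι] [DecidableEq ι] (α : ι → ℝ)
    (hsum : ∑ j, α j = 1) (X : ℂ) (j : ι) :
    ∑ ℓ ∈ univ \ {j}, ((α j : ℂ) * X) * (starRingEnd ℂ) ((α ℓ : ℂ) * X) =
      ((α j * (1 - α j) * Complex.normSq X : ℝ) : ℂ) := by
  have hrest : ∑ ℓ ∈ univ \ {j}, α ℓ = 1 - α j := by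
    rw [sdiff_singleton_eq_erase, ← hsum, ← add_sum_erase univ α (mem_univ j), add_sub_cancel_left]
  calc ∑ ℓ ∈ univ \ {j}, ((α j : ℂ) * X) * (starRingEnd ℂ) ((α ℓ : ℂ) * X)
      = (α j : ℂ) * (X * (starRingEnd ℂ) X) * ((∑ ℓ ∈ univ \ {j}, α ℓ : ℝ) : ℂ) := by
        push_cast
        rw [mul_sum]
        refine sum_congr rfl fun ℓ _ => ?_
        simp only [map_mul, Complex.conj_ofReal]
        ring
    _ = ((α j * (1 - α j) * Complex.normSq X : ℝ) : ℂ) := by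
        rw [hrest, Complex.mul_conj]
        push_cast
        ring

theorem sum_eq_add_card_sub_one_mul {ι : Type*} [Fintype ι] [DecidableEq ι] (α : ι → ℝ)
    (i : ι) {a b : ℝ} (hi : α i = a) (hrest : ∀ j, j ≠ i → α j = b) :
    ∑ j, α j = a + (Fintype.card ι - 1 : ℝ) * b := by
  rw [← add_sum_erase univ α (mem_univ i), hi,
    sum_congr rfl fun j hj => hrest j (mem_erase.mp hj).1, sum_const,
    card_erase_of_mem (mem_univ i), card_univ, nsmul_eq_mul,
    Nat.cast_pred (Fintype.card_pos_iff.mpr ⟨i⟩)]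

theorem eq_or_add_eq_one_of_mul_one_sub_eq {R : Type*} [CommRing R] [NoZeroDivisors R] {a b : R}
    (h : a * (1 - a) = b * (1 - b)) : a = b ∨ a + b = 1 := by
  have hfac : (a - b) * (1 - (a + b)) = 0 := by linear_combination h
  rcases mul_eq_zero.mp hfac with hab | hab
  · exact Or.inl (sub_eq_zero.mp hab)
  · exact Or.inr (sub_eq_zero.mp hab).symm

theorem stmt_13 (m : ℕ) (hm : 4 ≤ m) (X : ℂ) (lam : ℝ) (hlam : 0 < lam)
    (α : Fin m → ℝ) (a b : ℝ)
    (h0 : α ⟨0, by omega⟩ = a) (hrest : ∀ j : Fin m, j ≠ ⟨0, by omega⟩ → α j = b)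
    (h : ∀ j : Fin m, ∑ ℓ ∈ Finset.univ \ {j},
      ((α j : ℂ) * X) * (starRingEnd ℂ) ((α ℓ : ℂ) * X) = -(lam : ℂ))
    (hsum : ∑ j, α j = 1) :
    False := by
  have key (j : Fin m) : α j * (1 - α j) * Complex.normSq X = -lam := by
    exact_mod_cast (sum_sdiff_singleton_mul_conj α hsum X j).symm.trans (h j)
  have hb : b * (1 - b) * Complex.normSq X = -lam := by
    rw [← hrest ⟨1, by omega⟩ (by simp [Fin.ext_iff])]
    exact key _
  have hb_neg : b * (1 - b) < 0 :=
    neg_of_mul_neg_left (by linarith) (Complex.normSq_nonneg X)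
  have hN : Complex.normSq X ≠ 0 := by
    rintro hN
    rw [hN, mul_zero] at hb
    linarith
  have hab : a * (1 - a) = b * (1 - b) :=
    mul_right_cancel₀ hN ((h0 ▸ key _).trans hb.symm)
  have hcount := (sum_eq_add_card_sub_one_mul α _ h0 hrest).symm.trans hsum
  rw [Fintype.card_fin] at hcount
  have hm' : (4 : ℝ) ≤ m := by exact_mod_cast hm
  rcases eq_or_add_eq_one_of_mul_one_sub_eq hab with rfl | hab_one
  · have hma : (m : ℝ) * a = 1 := by linarith
    have ha_pos : 0 < a := pos_of_mul_pos_right (hma ▸ one_pos) (by linarith)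
    have ha_lt_one : a < 1 := by nlinarith
    exact (mul_pos ha_pos (sub_pos.mpr ha_lt_one)).not_gt hb_neg
  · have hb_zero : b = 0 := by
      have : ((m : ℝ) - 2) * b = 0 := by linarith
      exact (mul_eq_zero.mp this).resolve_left (by linarith)
    simp [hb_zero] at hb_neg
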